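/- Let X be a CAT(0) cube complex with the l¹ path metric, embedded via hyperplane coordinates into the cube C ⊆ l¹(H). Then the restriction of the l¹-metric of C to the image A of X coincides with the path metric induced on A; consequently the embedding X → C is an isometry. -/

import Mathlib

/-!
Join `ξ` to `η` inside `A` by changing one coordinate at a time along straight segments. If some
coordinate has to decrease, pick such a hyperplane `h₀` whose halfspace is minimal among them;
otherwise pick an increasing one whose halfspace is maximal. Either way `h₀` is free at `ξ`:
hyperplanes whose halfspace is disjoint from or inside that of `h₀` have coordinate `0` and
those whose halfspace contains it have coordinate `1`, so the coordinate `h₀` can be moved to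
`η h₀` without leaving `A`. Every step moves a single coordinate monotonically towards its
target, so the step lengths add up to the `l¹` distance, and the concatenated path has length
`edist ξ η`; no path is shorter.
-/

/-- An abstract model of a CAT(0) cube complex via its halfspace structure: each hyperplane `h`
has an outward halfspace `plus h` not containing the basepoint `x0`; every vertex lies outward
of only finitely many hyperplanes; and every pairwise-consistent orientation differing from the
basepoint orientation in finitely many hyperplanes is realized by a vertex. -/
structure CubeSystem (V H : Type*) where
  plus : H → Set V
  x0 : V
  basepoint : ∀ h, x0 ∉ plus h
  plus_nonempty : ∀ h, (plus h).Nonempty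
  plus_injective : ∀ h k, plus h = plus k → h = k
  vertexFinite : ∀ x : V, {h | x ∈ plus h}.Finite
  lowerFinite : ∀ h, {k | plus h ⊂ plus k}.Finite
  realize : ∀ o : H → Bool, {h | o h = true}.Finite →
    (∀ h k : H,
      ((if o h then plus h else (plus h)ᶜ) ∩ (if o k then plus k else (plus k)ᶜ)).Nonempty) →
    ∃ x : V, ∀ h, x ∈ plus h ↔ o h = true

namespace CubeSystem

variable {V H : Type*} (M : CubeSystem V H)

/-- `h < k`: the outward halfspace of `h` strictly contains that of `k`. -/
def Lt (h k : H) : Prop := M.plus k ⊂ M.plus h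

/-- Two hyperplanes are opposite if their outward halfspaces are disjoint. -/
def Opp (h k : H) : Prop := M.plus h ∩ M.plus k = ∅

/-- The canonical embedding of a vertex into the cube `C ⊆ l¹(H)`: the characteristic
function of the set of hyperplanes separating the basepoint from `x`. -/
noncomputable def vmap (x : V) : H → ℝ := fun h => by
  classical exact if x ∈ M.plus h then 1 else 0

/-- Membership in the cube `C`: finitely supported with values in `[0,1]`. -/
def memC (ξ : H → ℝ) : Prop := (∀ h, ξ h ∈ Set.Icc (0:ℝ) 1) ∧ {h | ξ h ≠ 0}.Finite

/-- `ξ` is intervalic: for every opposite pair `h, k`, `ξ_h = 0` or `ξ_k = 0`. -/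
def Intervalic (ξ : H → ℝ) : Prop := ∀ h k, M.Opp h k → ξ h = 0 ∨ ξ k = 0

/-- `ξ` is actual: for every pair `h < k`, `ξ_h = 1` or `ξ_k = 0`. -/
def Actual (ξ : H → ℝ) : Prop := ∀ h k, M.Lt h k → ξ h = 1 ∨ ξ k = 0

end CubeSystem

namespace CubeSystem

/-- Membership in `A ⊆ l¹(H)`: a point of the cube (coordinates in `[0,1]`, finitely
supported) which is intervalic and actual, i.e. a point of the embedded image of `X`. -/
def memA {V H : Type*} (M : CubeSystem V H) (ξ : lp (fun _ : H => ℝ) 1) : Prop :=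
  (∀ h, ξ h ∈ Set.Icc (0:ℝ) 1) ∧ {h | ξ h ≠ 0}.Finite ∧
    (∀ h k, M.Opp h k → ξ h = 0 ∨ ξ k = 0) ∧ (∀ h k, M.Lt h k → ξ h = 1 ∨ ξ k = 0)

end CubeSystem


open Set
open scoped ENNReal NNReal

section JoinedInLengthLE

variable {E : Type*}

def JoinedInLengthLE [PseudoEMetricSpace E] (A : Set E) (x y : E) (L : ℝ≥0∞) : Prop :=
  ∃ γ : ℝ → E, γ 0 = x ∧ γ 1 = y ∧ ContinuousOn γ (Icc 0 1) ∧ MapsTo γ (Icc 0 1) A ∧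
    eVariationOn γ (Icc 0 1) ≤ L

namespace JoinedInLengthLE

variable [PseudoEMetricSpace E] {A : Set E} {x y z : E} {L₁ L₂ : ℝ≥0∞}

theorem refl (hx : x ∈ A) : JoinedInLengthLE A x x 0 := by
  refine ⟨fun _ => x, rfl, rfl, continuousOn_const, fun _ _ => hx, ?_⟩
  rw [eVariationOn.constant_on (by simp)]

theorem trans (h₁ : JoinedInLengthLE A x y L₁) (h₂ : JoinedInLengthLE A y z L₂) :
    JoinedInLengthLE A x z (L₁ + L₂) := by
  obtain ⟨γ₁, hγ₁0, hγ₁1, hγ₁c, hγ₁A, hγ₁L⟩ := h₁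
  obtain ⟨γ₂, hγ₂0, hγ₂1, hγ₂c, hγ₂A, hγ₂L⟩ := h₂
  set φ₁ : ℝ → ℝ := fun t => 2 * t
  set φ₂ : ℝ → ℝ := fun t => 2 * t + -1
  have hφ₁ : φ₁ '' Icc 0 (1 / 2) = Icc 0 1 := by
    rw [image_mul_left_Icc' two_pos]; norm_num
  have hφ₂ : φ₂ '' Icc (1 / 2) 1 = Icc 0 1 := by
    rw [image_affine_Icc' two_pos]; norm_num
  have hφ₁_mono : Monotone φ₁ := fun a b hab => by simp only [φ₁]; linarith
  have hφ₂_mono : Monotone φ₂ := fun a b hab => by simp only [φ₂]; linarith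
  set γ : ℝ → E := fun t => if t ≤ 1 / 2 then γ₁ (φ₁ t) else γ₂ (φ₂ t)
  have hγ₁ : EqOn γ (γ₁ ∘ φ₁) (Icc 0 (1 / 2)) := fun t ht => if_pos ht.2
  have hγ₂ : EqOn γ (γ₂ ∘ φ₂) (Icc (1 / 2) 1) := by
    intro t ht
    by_cases h : t ≤ 1 / 2
    · obtain rfl : t = 1 / 2 := le_antisymm h ht.1
      simp [γ, φ₁, φ₂, hγ₁1, ← hγ₂0]
    · exact if_neg h
  have hsplit : Icc (0 : ℝ) 1 = Icc 0 (1 / 2) ∪ Icc (1 / 2) 1 :=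
    (Icc_union_Icc_eq_Icc (by norm_num) (by norm_num)).symm
  refine ⟨γ, ?_, ?_, ?_, ?_, ?_⟩
  · simp [γ, φ₁, hγ₁0]
  · rw [hγ₂ ⟨by norm_num, le_rfl⟩, Function.comp_apply, show φ₂ 1 = 1 by norm_num [φ₂], hγ₂1]
  · rw [hsplit]
    refine ContinuousOn.union_of_isClosed ?_ ?_ isClosed_Icc isClosed_Icc
    · refine (hγ₁c.comp (by fun_prop) ?_).congr hγ₁
      rw [← hφ₁]; exact mapsTo_image _ _
    · refine (hγ₂c.comp (by fun_prop) ?_).congr hγ₂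
      rw [← hφ₂]; exact mapsTo_image _ _
  · rw [hsplit]
    rintro t (ht | ht)
    · rw [hγ₁ ht]; exact hγ₁A (hφ₁ ▸ mem_image_of_mem φ₁ ht)
    · rw [hγ₂ ht]; exact hγ₂A (hφ₂ ▸ mem_image_of_mem φ₂ ht)
  · have hadd := eVariationOn.Icc_add_Icc γ (s := univ) (a := 0) (b := 1 / 2) (c := 1)
      (by norm_num) (by norm_num) (mem_univ _)
    simp only [univ_inter] at hadd
    rw [← hadd, eVariationOn.eq_of_eqOn hγ₁, eVariationOn.eq_of_eqOn hγ₂,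
      eVariationOn.comp_eq_of_monotoneOn _ _ (hφ₁_mono.monotoneOn _), hφ₁,
      eVariationOn.comp_eq_of_monotoneOn _ _ (hφ₂_mono.monotoneOn _), hφ₂]
    exact add_le_add hγ₁L hγ₂L

theorem edist_le (h : JoinedInLengthLE A x y L₁) : edist x y ≤ L₁ := by
  obtain ⟨γ, rfl, rfl, -, -, hL⟩ := h
  exact (eVariationOn.edist_le γ (left_mem_Icc.2 zero_le_one) (right_mem_Icc.2 zero_le_one)).trans hL

end JoinedInLengthLE

theorem joinedInLengthLE_of_segment_subset [NormedAddCommGroup E] [NormedSpace ℝ E] {A : Set E}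
    {x y : E} (h : segment ℝ x y ⊆ A) : JoinedInLengthLE A x y (edist x y) := by
  refine ⟨AffineMap.lineMap x y, AffineMap.lineMap_apply_zero x y, AffineMap.lineMap_apply_one x y,
    (AffineMap.lineMap_continuous).continuousOn, fun t ht => h ?_, ?_⟩
  · rw [segment_eq_image_lineMap]; exact mem_image_of_mem _ ht
  · have hid : eVariationOn id (Icc (0 : ℝ) 1) = 1 := by simp
    calc eVariationOn (AffineMap.lineMap x y) (Icc (0 : ℝ) 1)
        ≤ nndist x y * eVariationOn id (Icc (0 : ℝ) 1) :=
          ((lipschitzWith_lineMap x y).lipschitzOnWith (s := univ)).comp_eVariationOn_le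
            (mapsTo_univ _ _)
      _ = edist x y := by rw [hid, mul_one, edist_nndist]

theorem edist_eq_sInf_eVariationOn_of_joinedInLengthLE [PseudoEMetricSpace E] {A : Set E}
    {x y : E} (h : JoinedInLengthLE A x y (edist x y)) :
    edist x y = sInf {L : ℝ≥0∞ | ∃ γ : ℝ → E, γ 0 = x ∧ γ 1 = y ∧ ContinuousOn γ (Icc 0 1) ∧
      (∀ t ∈ Icc (0 : ℝ) 1, γ t ∈ A) ∧ L = eVariationOn γ (Icc 0 1)} := by
  refine le_antisymm (le_sInf ?_) ?_
  · rintro L ⟨γ, hγ0, hγ1, hγc, hγA, rfl⟩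
    exact JoinedInLengthLE.edist_le ⟨γ, hγ0, hγ1, hγc, hγA, le_rfl⟩
  · obtain ⟨γ, hγ0, hγ1, hγc, hγA, hL⟩ := h
    exact sInf_le_of_le ⟨γ, hγ0, hγ1, hγc, hγA, rfl⟩ hL

end JoinedInLengthLE

namespace lp

variable {α : Type*} {E : α → Type*} [∀ i, NormedAddCommGroup (E i)]

theorem exists_coe_eq_update [DecidableEq α] {p : ℝ≥0∞} (f : lp E p) (i : α) (c : E i) :
    ∃ g : lp E p, ⇑g = Function.update (⇑f) i c := by
  refine ⟨f + lp.single p i (c - f i), funext fun j => ?_⟩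
  rcases eq_or_ne j i with rfl | hj
  · simp
  · simp [hj]

theorem edist_eq_add_of_forall {f g k : lp E 1}
    (h : ∀ i, dist (f i) (k i) = dist (f i) (g i) + dist (g i) (k i)) :
    edist f k = edist f g + edist g k := by
  have hsum : ∀ u v : lp E 1, HasSum (fun i => dist (u i) (v i)) (dist u v) := fun u v => by
    simpa [dist_eq_norm] using lp.hasSum_norm (p := 1) (by norm_num) (u - v)
  rw [edist_dist, edist_dist, edist_dist, ← ENNReal.ofReal_add dist_nonneg dist_nonneg,
    (hsum f k).unique (by simpa only [h] using (hsum f g).add (hsum g k))]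

end lp

namespace CubeSystem

variable {V H : Type*} (M : CubeSystem V H)

def IsFreeCoord (ξ : H → ℝ) (h₀ : H) : Prop :=
  (∀ k, M.Opp h₀ k → ξ k = 0) ∧ (∀ k, M.Lt h₀ k → ξ k = 0) ∧ (∀ k, M.Lt k h₀ → ξ k = 1)

variable {M} {ξ η ζ : lp (fun _ : H => ℝ) 1}

theorem Opp.symm {h k : H} (hhk : M.Opp h k) : M.Opp k h := by
  rwa [Opp, inter_comm]

theorem Opp.ne {h k : H} (hhk : M.Opp h k) : h ≠ k := by
  rintro rfl
  exact (M.plus_nonempty h).ne_empty (by rwa [Opp, inter_self] at hhk)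

theorem Lt.ne {h k : H} (hhk : M.Lt h k) : h ≠ k := by
  rintro rfl
  exact ssubset_irrefl _ hhk

theorem IsFreeCoord.memA_of_forall_ne_eq {h₀ : H} (hfree : M.IsFreeCoord ξ h₀) (hξ : M.memA ξ)
    (hζ : ∀ h ≠ h₀, ζ h = ξ h) (hζ₀ : ζ h₀ ∈ Icc (0 : ℝ) 1) :
    M.memA ζ := by
  obtain ⟨hξI, hξfin, hξint, hξact⟩ := hξ
  obtain ⟨hfreeOpp, hfreeSub, hfreeSup⟩ := hfree
  refine ⟨fun h => ?_, (hξfin.insert h₀).subset fun h hh => ?_, fun h k hhk => ?_,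
    fun h k hhk => ?_⟩
  · rcases eq_or_ne h h₀ with rfl | hh
    · exact hζ₀
    · rw [hζ h hh]; exact hξI h
  · rcases eq_or_ne h h₀ with rfl | hne
    · exact mem_insert _ _
    · exact mem_insert_of_mem _ (by rwa [mem_ofPred_eq, ← hζ h hne])
  · rcases eq_or_ne h h₀ with rfl | hh
    · exact .inr ((hζ k hhk.ne.symm).trans (hfreeOpp k hhk))
    rcases eq_or_ne k h₀ with rfl | hk
    · exact .inl ((hζ h hh).trans (hfreeOpp h hhk.symm))
    rw [hζ h hh, hζ k hk]; exact hξint h k hhk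
  · rcases eq_or_ne h h₀ with rfl | hh
    · exact .inr ((hζ k hhk.ne.symm).trans (hfreeSub k hhk))
    rcases eq_or_ne k h₀ with rfl | hk
    · exact .inl ((hζ h hh).trans (hfreeSup h hhk))
    rw [hζ h hh, hζ k hk]; exact hξact h k hhk

theorem IsFreeCoord.segment_subset_memA {h₀ : H} (hfree : M.IsFreeCoord ξ h₀) (hξ : M.memA ξ)
    (hζ : M.memA ζ) (hξζ : ∀ h ≠ h₀, ζ h = ξ h) :
    segment ℝ ξ ζ ⊆ {θ | M.memA θ} := by
  rintro _ ⟨a, b, ha, hb, hab, rfl⟩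
  have hcoord : ∀ h, (a • ξ + b • ζ) h = a * ξ h + b * ζ h := fun h => rfl
  refine hfree.memA_of_forall_ne_eq hξ (fun h hh => ?_) ?_
  · rw [hcoord, hξζ h hh, ← add_mul, hab, one_mul]
  · rw [hcoord]; exact convex_Icc (0 : ℝ) 1 (hξ.1 h₀) (hζ.1 h₀) ha hb hab

theorem finite_ne_of_memA (hξ : M.memA ξ) (hη : M.memA η) :
    {h | ξ h ≠ η h}.Finite :=
  (hξ.2.1.union hη.2.1).subset fun h hh => by
    by_contra hcon
    simp only [mem_union, mem_ofPred_eq, not_or, not_not] at hcon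
    exact hh (hcon.1.trans hcon.2.symm)


theorem isFreeCoord_of_minimalFor_decreasing (hξ : M.memA ξ) (hη : M.memA η) {h₀ : H}
    (hmin : MinimalFor (fun h => η h < ξ h) M.plus h₀) : M.IsFreeCoord ξ h₀ := by
  have hpos : ξ h₀ ≠ 0 := ((hη.1 h₀).1.trans_lt hmin.1).ne'
  refine ⟨fun k hk => (hξ.2.2.1 h₀ k hk).resolve_left hpos, fun k hk => ?_,
    fun k hk => (hξ.2.2.2 k h₀ hk).resolve_right hpos⟩
  by_contra hξk
  have hξ₀ : ξ h₀ = 1 := (hξ.2.2.2 h₀ k hk).resolve_right hξk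
  have hηk : η k = 0 := (hη.2.2.2 h₀ k hk).resolve_left (by linarith [hmin.1])
  have hdec : η k < ξ k := hηk ▸ (hξ.1 k).1.lt_of_ne' hξk
  exact hk.2 (hmin.2 hdec hk.1)

theorem isFreeCoord_of_maximalFor_increasing (hξ : M.memA ξ) (hη : M.memA η)
    (hle : ∀ h, ξ h ≤ η h) {h₀ : H} (hmax : MaximalFor (fun h => ξ h < η h) M.plus h₀) :
    M.IsFreeCoord ξ h₀ := by
  have hpos : η h₀ ≠ 0 := ((hξ.1 h₀).1.trans_lt hmax.1).ne'
  refine ⟨fun k hk => ?_, fun k hk => ?_, fun k hk => ?_⟩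
  · exact le_antisymm ((hle k).trans_eq ((hη.2.2.1 h₀ k hk).resolve_left hpos)) (hξ.1 k).1
  · exact (hξ.2.2.2 h₀ k hk).resolve_left (by linarith [hmax.1, (hη.1 h₀).2])
  · by_contra hξk
    have hηk : η k = 1 := (hη.2.2.2 k h₀ hk).resolve_right hpos
    have hinc : ξ k < η k := hηk ▸ (hξ.1 k).2.lt_of_ne hξk
    exact hk.2 (hmax.2 hinc hk.1)

theorem exists_isFreeCoord_ne (hξ : M.memA ξ) (hη : M.memA η) (hne : ∃ h, ξ h ≠ η h) :
    ∃ h₀, ξ h₀ ≠ η h₀ ∧ M.IsFreeCoord ξ h₀ := by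
  by_cases hdec : ∃ h, η h < ξ h
  · have hfin : {h | η h < ξ h}.Finite :=
      hξ.2.1.subset fun h hh => ((hη.1 h).1.trans_lt hh).ne'
    obtain ⟨h₀, hmin⟩ := hfin.exists_minimalFor M.plus _ hdec
    exact ⟨h₀, hmin.1.ne', isFreeCoord_of_minimalFor_decreasing hξ hη hmin⟩
  · push Not at hdec
    obtain ⟨h, hh⟩ := hne
    have hfin : {h | ξ h < η h}.Finite :=
      hη.2.1.subset fun h hh => ((hξ.1 h).1.trans_lt hh).ne'
    obtain ⟨h₀, hmax⟩ := hfin.exists_maximalFor M.plus _ ⟨h, (hdec h).lt_of_ne hh⟩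
    exact ⟨h₀, hmax.1.ne, isFreeCoord_of_maximalFor_increasing hξ hη hdec hmax⟩

theorem joinedInLengthLE_memA (hξ : M.memA ξ) (hη : M.memA η) :
    JoinedInLengthLE {θ | M.memA θ} ξ η (edist ξ η) := by
  classical
  obtain ⟨n, hn⟩ : ∃ n, {h | ξ h ≠ η h}.ncard = n := ⟨_, rfl⟩
  induction n generalizing ξ with
  | zero =>
    have hξη : ξ = η := lp.ext <| funext fun h => by
      by_contra hh
      exact (ncard_eq_zero (finite_ne_of_memA hξ hη)).1 hn |>.subset hh
    subst hξη
    rw [edist_self]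
    exact .refl hξ
  | succ n ih =>
    obtain ⟨h₀, hne₀, hfree⟩ := exists_isFreeCoord_ne hξ hη
      (nonempty_of_ncard_ne_zero (hn ▸ n.succ_ne_zero))
    obtain ⟨ζ, hζ⟩ := lp.exists_coe_eq_update ξ h₀ (η h₀)
    have hζ₀ : ζ h₀ = η h₀ := by simp [hζ]
    have hζξ : ∀ h ≠ h₀, ζ h = ξ h := fun h hh => by simp [hζ, hh]
    have hζA : M.memA ζ := hfree.memA_of_forall_ne_eq hξ hζξ (hζ₀ ▸ hη.1 h₀)
    have hsplit : edist ξ η = edist ξ ζ + edist ζ η := lp.edist_eq_add_of_forall fun h => by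
      rcases eq_or_ne h h₀ with rfl | hh
      · rw [hζ₀, dist_self, add_zero]
      · rw [hζξ h hh, dist_self, zero_add]
    have hcard : {h | ζ h ≠ η h}.ncard = n := by
      have hdiff : {h | ζ h ≠ η h} = {h | ξ h ≠ η h} \ {h₀} := by
        ext h
        rcases eq_or_ne h h₀ with rfl | hh
        · simp [hζ₀]
        · simp [hζξ h hh, hh]
      rw [hdiff, ncard_sdiff_singleton_of_mem hne₀, hn, Nat.add_sub_cancel]
    rw [hsplit]
    exact (joinedInLengthLE_of_segment_subset (hfree.segment_subset_memA hξ hζA hζξ)).trans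
      (ih hζA hcard)

end CubeSystem

/-- The `l¹`-metric restricted to the embedded image `A` of `X` in `l¹(H)` coincides with the
induced path metric on `A`: for `ξ, η ∈ A`, the distance `edist ξ η` equals the infimum of the
lengths (total variations) of continuous paths from `ξ` to `η` lying in `A`.  Consequently the
embedding of `X` (with its `l¹` path metric) into `l¹(H)` is an isometry. -/
theorem stmt15 {V H : Type*} (M : CubeSystem V H) (ξ η : lp (fun _ : H => ℝ) 1)
    (hξ : M.memA ξ) (hη : M.memA η) :
    edist ξ η = sInf {L : ENNReal | ∃ γ : ℝ → lp (fun _ : H => ℝ) 1,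
      γ 0 = ξ ∧ γ 1 = η ∧ ContinuousOn γ (Set.Icc 0 1) ∧
      (∀ t ∈ Set.Icc (0:ℝ) 1, M.memA (γ t)) ∧ L = eVariationOn γ (Set.Icc 0 1)} :=
  edist_eq_sInf_eVariationOn_of_joinedInLengthLE (M.joinedInLengthLE_memA hξ hη)
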